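/- Let μ be a d-regular measure on H and λ > 0. Define c_MT²(x,t,λ) = ∫_{U_λ(B(x,t))} c_MT(X)² dμ^{d+2}(X) where U_λ(B(x,t)) = {X ∈ B(x,t)^{d+2} : min(X) ≥ λ·t}. Then for any ball B ⊆ H, ∫_B ∫_0^{diam(B)} c_MT²(x,t,λ) t^{−(d+1)} dt dμ(x) ≤ (2/λ)^d · (C_μ/d) · ∫_{W_{λ/2}(3B)} c_MT(X)² dμ^{d+2}(X), where W_{λ/2}(3B) = {X ∈ (3B)^{d+2} : min(X) ≥ (λ/2)·diam(X) > 0} and 3B is the ball with the same center and triple radius. -/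

import Mathlib

open MeasureTheory Metric Finset

noncomputable section

/-- n! times the n-volume of the simplex on y₀,…,y_n (Gram determinant form). -/
def simplexContent {H : Type*} [NormedAddCommGroup H] [InnerProductSpace ℝ H]
    (n : ℕ) (y : Fin (n + 1) → H) : ℝ :=
  Real.sqrt (Matrix.det (Matrix.of fun i j : Fin n =>
    (inner ℝ (y i.succ - y 0) (y j.succ - y 0) : ℝ)))

/-- The polar sine of X at the vertex X i. -/
def polarSin {H : Type*} [NormedAddCommGroup H] [InnerProductSpace ℝ H]
    {n : ℕ} (X : Fin (n + 2) → H) (i : Fin (n + 2)) : ℝ :=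
  simplexContent (n + 1) X / ∏ j ∈ Finset.univ.erase i, dist (X j) (X i)

/-- The smallest pairwise distance among the coordinates of X. -/
def tmin {H : Type*} [PseudoMetricSpace H] {n : ℕ} (X : Fin n → H) : ℝ :=
  sInf {r | ∃ i j, i ≠ j ∧ r = dist (X i) (X j)}

/-- The largest pairwise distance among the coordinates of X. -/
def tdiam {H : Type*} [PseudoMetricSpace H] {n : ℕ} (X : Fin n → H) : ℝ :=
  Metric.diam (Set.range X)

/-- c_MT(X)² = (1/(d+2))·diam(X)^{−d(d+1)}·Σᵢ p_d sin_{xᵢ}(X)². -/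
def cMTsq {H : Type*} [NormedAddCommGroup H] [InnerProductSpace ℝ H]
    (d : ℕ) (X : Fin (d + 2) → H) : ℝ :=
  (1 / (d + 2)) * (∑ i, polarSin X i ^ 2) / tdiam X ^ (d * (d + 1))

/-- U_λ(B(x,t)): simplices in B(x,t)^{d+2} with min(X) ≥ λ·t. -/
def USet {H : Type*} [PseudoMetricSpace H] (d : ℕ) (lam : ℝ) (x : H) (t : ℝ) :
    Set (Fin (d + 2) → H) :=
  {X | (∀ i, X i ∈ closedBall x t) ∧ lam * t ≤ tmin X}

/-- W_λ(B): simplices in B^{d+2} with min(X) ≥ λ·diam(X) > 0. -/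
def WSet {H : Type*} [PseudoMetricSpace H] (d : ℕ) (lam : ℝ) (B : Set H) :
    Set (Fin (d + 2) → H) :=
  {X | (∀ i, X i ∈ B) ∧ lam * tdiam X ≤ tmin X ∧ 0 < lam * tdiam X}

/-- The (closed) support of a measure. -/
def msupport {H : Type*} [MetricSpace H] [MeasurableSpace H] (μ : Measure H) : Set H :=
  {x | ∀ r : ℝ, 0 < r → 0 < μ (closedBall x r)}

/-- μ is d-regular with regularity constant Cμ. -/
def IsDRegular {H : Type*} [MetricSpace H] [MeasurableSpace H] (d : ℕ) (Cμ : ℝ)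
    (μ : Measure H) : Prop :=
  1 ≤ Cμ ∧ ∀ x ∈ msupport μ, ∀ t : ℝ, 0 < t →
    ENNReal.ofReal t ≤ EMetric.diam (msupport μ) →
      ENNReal.ofReal (Cμ⁻¹ * t ^ d) ≤ μ (closedBall x t) ∧
        μ (closedBall x t) ≤ ENNReal.ofReal (Cμ * t ^ d)

/-!
Only measurability of `c_MT²` matters; call it `f`. By Tonelli the left side is
`∫ f(X) w(X) dμ^{d+2}(X)` with `w(X) = ∫_B ∫_0^{diam B} 1[X ∈ U_λ(B(x,t))] t^{-(d+1)} dt dμ(x)`.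
If `X ∈ U_λ(B(x,t))` then `diam X ≤ 2t` and `|x - X₀| ≤ t ≤ min X / λ`, so
`w(X) ≤ μ(B(X₀, min X / λ)) ∫_{diam X / 2}^∞ t^{-(d+1)} dt ≤ Cμ (min X / λ)^d (2 / diam X)^d / d`,
which is at most `(2/λ)^d Cμ / d`; moreover `w(X) = 0` unless `X ∈ W_{λ/2}(3B)`.
-/

open scoped ENNReal

section MinDiam

variable {M : Type*} [PseudoMetricSpace M] {n : ℕ}

theorem univ_offDiag_nonempty : (univ : Finset (Fin (n + 2))).offDiag.Nonempty :=
  ⟨(0, 1), by simp⟩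

theorem tmin_eq_inf' (X : Fin (n + 2) → M) :
    tmin X = univ.offDiag.inf' univ_offDiag_nonempty fun p => dist (X p.1) (X p.2) := by
  rw [inf'_eq_csInf_image, tmin]
  congr 1
  ext r
  simp [eq_comm]

theorem tmin_le_dist (X : Fin (n + 2) → M) {i j : Fin (n + 2)} (hij : i ≠ j) :
    tmin X ≤ dist (X i) (X j) := by
  rw [tmin_eq_inf']
  exact inf'_le (b := (i, j)) (fun p : Fin (n + 2) × Fin (n + 2) => dist (X p.1) (X p.2))
    (mem_offDiag.2 ⟨mem_univ i, mem_univ j, hij⟩)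

theorem continuous_tmin : Continuous fun X : Fin (n + 2) → M => tmin X := by
  simp_rw [tmin_eq_inf']
  exact Continuous.finset_inf'_apply _ fun p _ =>
    (continuous_apply p.1).dist (continuous_apply p.2)

theorem dist_le_tdiam (X : Fin n → M) (i j : Fin n) : dist (X i) (X j) ≤ tdiam X :=
  dist_le_diam_of_mem (Set.finite_range X).isBounded ⟨i, rfl⟩ ⟨j, rfl⟩

theorem tmin_le_tdiam (X : Fin (n + 2) → M) : tmin X ≤ tdiam X :=
  (tmin_le_dist X Fin.zero_ne_one).trans (dist_le_tdiam X 0 1)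

theorem tdiam_eq_sup' (X : Fin (n + 2) → M) :
    tdiam X =
      univ.sup' univ_nonempty fun p : Fin (n + 2) × Fin (n + 2) => dist (X p.1) (X p.2) := by
  refine le_antisymm (diam_le_of_forall_dist_le ?_ ?_)
    (sup'_le _ _ fun p _ => dist_le_tdiam X _ _)
  · exact dist_nonneg.trans (le_sup' (fun p : Fin (n + 2) × Fin (n + 2) => dist (X p.1) (X p.2))
      (mem_univ (0, 0)))
  · rintro _ ⟨i, rfl⟩ _ ⟨j, rfl⟩
    exact le_sup' (fun p : Fin (n + 2) × Fin (n + 2) => dist (X p.1) (X p.2)) (mem_univ (i, j))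

theorem continuous_tdiam : Continuous fun X : Fin (n + 2) → M => tdiam X := by
  simp_rw [tdiam_eq_sup']
  exact Continuous.finset_sup'_apply _ fun p _ =>
    (continuous_apply p.1).dist (continuous_apply p.2)

end MinDiam

theorem continuous_simplexContent {H : Type*} [NormedAddCommGroup H] [InnerProductSpace ℝ H]
    (n : ℕ) : Continuous fun y : Fin (n + 1) → H => simplexContent n y := by
  unfold simplexContent
  fun_prop

theorem measurable_cMTsq {H : Type*} [NormedAddCommGroup H] [InnerProductSpace ℝ H]
    [SecondCountableTopology H] [MeasurableSpace H] [BorelSpace H] (d : ℕ) :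
    Measurable fun X : Fin (d + 2) → H => cMTsq d X := by
  have hcontent := (continuous_simplexContent (H := H) (d + 1)).measurable
  have hdiam := (continuous_tdiam (M := H) (n := d)).measurable
  unfold cMTsq polarSin
  fun_prop

section Regularity

variable {M : Type*} [MetricSpace M] [MeasurableSpace M]

theorem support_subset_msupport (μ : Measure M) : μ.support ⊆ msupport μ :=
  fun x hx _ hr => (Measure.mem_support_iff_forall x).1 hx _ (closedBall_mem_nhds x hr)

theorem ae_mem_msupport [HereditarilyLindelofSpace M] (μ : Measure M) :
    ∀ᵐ x ∂μ, x ∈ msupport μ :=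
  Filter.mem_of_superset Measure.support_mem_ae (support_subset_msupport μ)

/-- Regularity only bounds balls up to the diameter of the support; larger balls centred on the
support carry no more mass than the ball of that diameter. -/
theorem IsDRegular.measure_closedBall_le [HereditarilyLindelofSpace M] {d : ℕ} {Cμ : ℝ}
    {μ : Measure M} (hreg : IsDRegular d Cμ μ) {y : M} (hy : y ∈ msupport μ) {T : ℝ}
    (hT : 0 < T) (hdiam : 0 < ediam (msupport μ)) :
    μ (closedBall y T) ≤ ENNReal.ofReal (Cμ * T ^ d) := by
  rcases le_or_gt (ENNReal.ofReal T) (ediam (msupport μ)) with hT_le | hD_lt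
  · exact (hreg.2 y hy T hT hT_le).2
  set D := (ediam (msupport μ)).toReal
  have hfin : ediam (msupport μ) ≠ ⊤ := hD_lt.ne_top
  have hD : 0 < D := ENNReal.toReal_pos hdiam.ne' hfin
  have hDT : D ≤ T := ENNReal.toReal_le_of_le_ofReal hT.le hD_lt.le
  have hsupp : msupport μ ⊆ closedBall y D := fun w hw => by
    simpa [dist_edist] using ENNReal.toReal_mono hfin (edist_le_ediam_of_mem hw hy)
  have hCμ : 0 ≤ Cμ := zero_le_one.trans hreg.1
  calc μ (closedBall y T) ≤ μ (closedBall y D) :=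
        measure_mono_ae <| (ae_mem_msupport μ).mono fun w hw _ => hsupp hw
    _ ≤ ENNReal.ofReal (Cμ * D ^ d) :=
        (hreg.2 y hy D hD (ENNReal.ofReal_toReal hfin).le).2
    _ ≤ ENNReal.ofReal (Cμ * T ^ d) := by gcongr

end Regularity

theorem lintegral_Ici_inv_pow_succ {d : ℕ} (hd : 1 ≤ d) {a : ℝ} (ha : 0 < a) :
    ∫⁻ t in Set.Ici a, (ENNReal.ofReal (t ^ (d + 1)))⁻¹ = ENNReal.ofReal ((a ^ d)⁻¹ / d) := by
  have hd' : (1 : ℝ) ≤ d := by exact_mod_cast hd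
  have hlt : -((d : ℝ) + 1) < -1 := by linarith
  have hrpow : ∀ t ∈ Set.Ioi a, (ENNReal.ofReal (t ^ (d + 1)))⁻¹
      = ENNReal.ofReal (t ^ (-((d : ℝ) + 1))) := fun t ht => by
    rw [← ENNReal.ofReal_inv_of_pos (pow_pos (ha.trans ht) _), Real.rpow_neg (ha.trans ht).le]
    norm_cast
  rw [← setLIntegral_congr Ioi_ae_eq_Ici, setLIntegral_congr_fun measurableSet_Ioi hrpow,
    ← ofReal_integral_eq_lintegral_ofReal (integrableOn_Ioi_rpow_of_lt hlt ha)
      (ae_restrict_of_forall_mem measurableSet_Ioi fun t ht =>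
        Real.rpow_nonneg (ha.trans ht).le _),
    integral_Ioi_rpow_of_lt hlt ha, show -((d : ℝ) + 1) + 1 = -d by ring, Real.rpow_neg ha.le,
    Real.rpow_natCast]
  congr 1
  field_simp

section Scales

variable {M : Type*} [MetricSpace M] {d : ℕ} {lam t : ℝ} {x : M} {X : Fin (d + 2) → M}

theorem mem_uSet_iff : X ∈ USet d lam x t ↔ (∀ i, dist (X i) x ≤ t) ∧ lam * t ≤ tmin X :=
  Iff.rfl

theorem tdiam_le_two_mul_of_mem_uSet (hX : X ∈ USet d lam x t) : tdiam X ≤ 2 * t := by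
  obtain ⟨hball, -⟩ := mem_uSet_iff.1 hX
  refine diam_le_of_forall_dist_le (by linarith [dist_nonneg.trans (hball 0)]) ?_
  rintro _ ⟨i, rfl⟩ _ ⟨j, rfl⟩
  linarith [dist_triangle_right (X i) (X j) x, hball i, hball j]

theorem mem_closedBall_of_mem_uSet (hlam : 0 < lam) (hX : X ∈ USet d lam x t) :
    x ∈ closedBall (X 0) (tmin X / lam) := by
  obtain ⟨hball, hmin⟩ := mem_uSet_iff.1 hX
  rw [mem_closedBall, dist_comm, le_div_iff₀ hlam]
  nlinarith [hball 0]

theorem uSet_subset_wSet (hlam : 0 < lam) {z : M} {r : ℝ} (hx : x ∈ closedBall z r)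
    (ht : t ∈ Set.Ioc 0 (diam (closedBall z r))) :
    USet d lam x t ⊆ WSet d (lam / 2) (closedBall z (3 * r)) := by
  intro X hX
  obtain ⟨hball, hmin⟩ := mem_uSet_iff.1 hX
  have ht2r : t ≤ 2 * r := ht.2.trans (diam_closedBall (dist_nonneg.trans hx))
  have hdiam := tdiam_le_two_mul_of_mem_uSet hX
  have hpos : 0 < tdiam X := ((mul_pos hlam ht.1).trans_le hmin).trans_le (tmin_le_tdiam X)
  refine ⟨fun i => ?_, by nlinarith, by positivity⟩
  rw [mem_closedBall]
  linarith [dist_triangle (X i) x z, hball i, mem_closedBall.1 hx]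

theorem isClosed_setOf_mem_uSet (d : ℕ) (lam : ℝ) :
    IsClosed {p : M × ℝ × (Fin (d + 2) → M) | p.2.2 ∈ USet d lam p.1 p.2.1} := by
  simp only [mem_uSet_iff, Set.ofPred_and, Set.ofPred_forall]
  exact (isClosed_iInter fun i => isClosed_le (by fun_prop) (by fun_prop)).inter
    (isClosed_le (by fun_prop) (continuous_tmin.comp (by fun_prop)))

theorem isClosed_uSet (d : ℕ) (lam : ℝ) (x : M) (t : ℝ) : IsClosed (USet d lam x t) :=
  (isClosed_setOf_mem_uSet d lam).preimage (by fun_prop : Continuous fun X => (x, t, X))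

theorem measurableSet_wSet [SecondCountableTopology M] [MeasurableSpace M] [BorelSpace M]
    {B : Set M} (hB : MeasurableSet B) (d : ℕ) (lam : ℝ) : MeasurableSet (WSet d lam B) := by
  simp only [WSet, Set.ofPred_and, Set.ofPred_forall]
  exact (MeasurableSet.iInter fun i => measurable_pi_apply i hB).inter
    ((measurableSet_le (continuous_tdiam.measurable.const_mul lam)
      continuous_tmin.measurable).inter
        (measurableSet_lt measurable_const (continuous_tdiam.measurable.const_mul lam)))

end Scales

section Kernel

variable {M : Type*} [MetricSpace M] {d : ℕ} {lam : ℝ}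

def uSetKernel (d : ℕ) (lam : ℝ) (x : M) (t : ℝ) (X : Fin (d + 2) → M) : ℝ≥0∞ :=
  (USet d lam x t).indicator 1 X / ENNReal.ofReal (t ^ (d + 1))

theorem measurable_uSetKernel [SecondCountableTopology M] [MeasurableSpace M] [BorelSpace M]
    (d : ℕ) (lam : ℝ) :
    Measurable fun p : M × ℝ × (Fin (d + 2) → M) => uSetKernel d lam p.1 p.2.1 p.2.2 := by
  unfold uSetKernel
  exact (measurable_one.indicator (isClosed_setOf_mem_uSet d lam).measurableSet).div
    (by fun_prop)

theorem uSetKernel_le (hlam : 0 < lam) (x : M) (t : ℝ) (X : Fin (d + 2) → M) :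
    uSetKernel d lam x t X ≤ (closedBall (X 0) (tmin X / lam)).indicator 1 x *
      (Set.Ici (tdiam X / 2)).indicator (fun s => (ENNReal.ofReal (s ^ (d + 1)))⁻¹) t := by
  by_cases hX : X ∈ USet d lam x t
  · have ht : tdiam X / 2 ≤ t := by linarith [tdiam_le_two_mul_of_mem_uSet hX]
    simp [uSetKernel, hX, mem_closedBall_of_mem_uSet hlam hX, ht]
  · simp [uSetKernel, hX]

variable [MeasurableSpace M] [OpensMeasurableSpace M] [HereditarilyLindelofSpace M]

theorem lintegral_lintegral_uSetKernel_le (hd : 1 ≤ d) {Cμ : ℝ} {μ : Measure M}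
    (hreg : IsDRegular d Cμ μ) (hlam : 0 < lam) {X : Fin (d + 2) → M}
    (hX : ∀ i, X i ∈ msupport μ) (hmin : 0 < tmin X) :
    ∫⁻ x, (∫⁻ t, uSetKernel d lam x t X) ∂μ ≤ ENNReal.ofReal ((2 / lam) ^ d * (Cμ / d)) := by
  set T := tmin X / lam with hT_def
  set a := tdiam X / 2 with ha_def
  set g := (Set.Ici a).indicator fun s : ℝ => (ENNReal.ofReal (s ^ (d + 1)))⁻¹
  have ha : 0 < a := half_pos (hmin.trans_le (tmin_le_tdiam X))
  have hT : 0 < T := div_pos hmin hlam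
  have hTa : T / a ≤ 2 / lam := by
    rw [div_le_iff₀ ha, hT_def, ha_def, show 2 / lam * (tdiam X / 2) = tdiam X / lam by ring]
    exact div_le_div_of_nonneg_right (tmin_le_tdiam X) hlam.le
  have hdiam : 0 < ediam (msupport μ) :=
    (edist_pos.2 fun h => by simpa [h] using hmin.trans_le (tmin_le_dist X zero_ne_one)).trans_le
      (edist_le_ediam_of_mem (hX 0) (hX 1))
  have hg : Measurable g := Measurable.indicator (by fun_prop) measurableSet_Ici
  have hCμ : 0 ≤ Cμ := zero_le_one.trans hreg.1
  calc ∫⁻ x, (∫⁻ t, uSetKernel d lam x t X) ∂μ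
      ≤ ∫⁻ x, (∫⁻ t, (closedBall (X 0) T).indicator 1 x * g t) ∂μ :=
        lintegral_mono fun x => lintegral_mono fun t => uSetKernel_le hlam x t X
    _ = μ (closedBall (X 0) T) * ∫⁻ t in Set.Ici a, (ENNReal.ofReal (t ^ (d + 1)))⁻¹ := by
        simp_rw [lintegral_const_mul _ hg]
        rw [lintegral_mul_const _ (measurable_one.indicator measurableSet_closedBall),
          lintegral_indicator_one measurableSet_closedBall, lintegral_indicator measurableSet_Ici]
    _ ≤ ENNReal.ofReal (Cμ * T ^ d) * ENNReal.ofReal ((a ^ d)⁻¹ / d) := by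
        rw [lintegral_Ici_inv_pow_succ hd ha]
        gcongr
        exact hreg.measure_closedBall_le (hX 0) hT hdiam
    _ = ENNReal.ofReal ((T / a) ^ d * (Cμ / d)) := by
        rw [← ENNReal.ofReal_mul (by positivity), div_pow T a d]
        congr 1
        ring
    _ ≤ ENNReal.ofReal ((2 / lam) ^ d * (Cμ / d)) := by gcongr

end Kernel

section Fubini

variable {M : Type*} [MetricSpace M] [SecondCountableTopology M] [MeasurableSpace M]
  [BorelSpace M] {d : ℕ} {lam : ℝ}

theorem setLIntegral_uSet_div_eq {ν : Measure (Fin (d + 2) → M)}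
    {f : (Fin (d + 2) → M) → ℝ≥0∞} (hf : Measurable f) (x : M) (t : ℝ) :
    (∫⁻ X in USet d lam x t, f X ∂ν) / ENNReal.ofReal (t ^ (d + 1)) =
      ∫⁻ X, f X * uSetKernel d lam x t X ∂ν := by
  rw [div_eq_mul_inv, ← lintegral_mul_const _ hf,
    ← lintegral_indicator (isClosed_uSet d lam x t).measurableSet]
  congr 1 with X
  by_cases hX : X ∈ USet d lam x t <;> simp [uSetKernel, hX, div_eq_mul_inv]

theorem lintegral_lintegral_setLIntegral_uSet_div_eq {μ : Measure M} [SFinite μ]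
    {ν : Measure (Fin (d + 2) → M)} [SFinite ν] {f : (Fin (d + 2) → M) → ℝ≥0∞}
    (hf : Measurable f) (B : Set M) (I : Set ℝ) :
    ∫⁻ x in B, (∫⁻ t in I, (∫⁻ X in USet d lam x t, f X ∂ν) / ENNReal.ofReal (t ^ (d + 1))) ∂μ =
      ∫⁻ X, f X * ∫⁻ x in B, (∫⁻ t in I, uSetKernel d lam x t X) ∂μ ∂ν := by
  have hK := measurable_uSetKernel (M := M) d lam
  simp_rw [setLIntegral_uSet_div_eq hf]
  calc ∫⁻ x in B, (∫⁻ t in I, ∫⁻ X, f X * uSetKernel d lam x t X ∂ν) ∂μ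
      = ∫⁻ x in B, ∫⁻ X, (∫⁻ t in I, f X * uSetKernel d lam x t X) ∂ν ∂μ :=
        lintegral_congr fun x => lintegral_lintegral_swap ((hf.comp measurable_snd).mul
          (hK.comp (measurable_const.prodMk measurable_id))).aemeasurable
    _ = ∫⁻ X, ∫⁻ x in B, (∫⁻ t in I, f X * uSetKernel d lam x t X) ∂μ ∂ν :=
        lintegral_lintegral_swap (Measurable.lintegral_prod_right'
          ((hf.comp (measurable_snd.comp measurable_fst)).mul
            (hK.comp ((measurable_fst.comp measurable_fst).prodMk
              (measurable_snd.prodMk (measurable_snd.comp measurable_fst)))))).aemeasurable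
    _ = ∫⁻ X, f X * ∫⁻ x in B, (∫⁻ t in I, uSetKernel d lam x t X) ∂μ ∂ν := by
        refine lintegral_congr fun X => ?_
        have hKX : Measurable fun x => ∫⁻ t in I, uSetKernel d lam x t X :=
          (hK.comp (measurable_fst.prodMk
            (measurable_snd.prodMk measurable_const))).lintegral_prod_right'
        rw [← lintegral_const_mul _ hKX]
        exact lintegral_congr fun x => lintegral_const_mul _
          (hK.comp (measurable_const.prodMk (measurable_id.prodMk measurable_const)))

end Fubini

theorem multiscale_fubini_bound_of_measurable {M : Type*} [MetricSpace M]
    [SecondCountableTopology M] [MeasurableSpace M] [BorelSpace M] {d : ℕ} (hd : 1 ≤ d)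
    {Cμ : ℝ} {μ : Measure M} [SigmaFinite μ] (hreg : IsDRegular d Cμ μ) {lam : ℝ}
    (hlam : 0 < lam) {f : (Fin (d + 2) → M) → ℝ≥0∞} (hf : Measurable f) (z : M) (r : ℝ) :
    ∫⁻ x in closedBall z r, (∫⁻ t in Set.Ioc 0 (diam (closedBall z r)),
        (∫⁻ X in USet d lam x t, f X ∂Measure.pi fun _ => μ) / ENNReal.ofReal (t ^ (d + 1))) ∂μ ≤
      ENNReal.ofReal ((2 / lam) ^ d * (Cμ / d)) *
        ∫⁻ X in WSet d (lam / 2) (closedBall z (3 * r)), f X ∂Measure.pi fun _ => μ := by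
  set W := WSet d (lam / 2) (closedBall z (3 * r))
  have hsupp : ∀ᵐ X ∂Measure.pi fun _ : Fin (d + 2) => μ, ∀ i, X i ∈ msupport μ :=
    ae_all_iff.2 fun i => Measure.tendsto_eval_ae_ae.eventually (ae_mem_msupport μ)
  rw [lintegral_lintegral_setLIntegral_uSet_div_eq hf,
    ← lintegral_indicator (measurableSet_wSet measurableSet_closedBall d (lam / 2)),
    ← lintegral_const_mul' _ _ ENNReal.ofReal_ne_top]
  refine lintegral_mono_ae (hsupp.mono fun X hX => ?_)
  by_cases hXW : X ∈ W
  · rw [Set.indicator_of_mem hXW, mul_comm (ENNReal.ofReal _)]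
    gcongr
    calc _ ≤ ∫⁻ x, (∫⁻ t, uSetKernel d lam x t X) ∂μ :=
          lintegral_mono' Measure.restrict_le_self fun x => setLIntegral_le_lintegral _ _
      _ ≤ _ := lintegral_lintegral_uSetKernel_le hd hreg hlam hX (hXW.2.2.trans_le hXW.2.1)
  · have hzero : ∫⁻ x in closedBall z r,
        (∫⁻ t in Set.Ioc 0 (diam (closedBall z r)), uSetKernel d lam x t X) ∂μ = 0 := by
      refine (setLIntegral_congr_fun measurableSet_closedBall fun x hx => ?_).trans lintegral_zero
      refine (setLIntegral_congr_fun measurableSet_Ioc fun t ht => ?_).trans lintegral_zero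
      have hU : X ∉ USet d lam x t := fun hU => hXW (uSet_subset_wSet hlam hx ht hU)
      simp [uSetKernel, hU]
    rw [hzero, mul_zero]
    exact zero_le

theorem multiscale_curvature_fubini_bound_general {H : Type*} [NormedAddCommGroup H]
    [InnerProductSpace ℝ H] [SecondCountableTopology H]
    [MeasurableSpace H] [BorelSpace H]
    (d : ℕ) (hd : 1 ≤ d)
    (Cμ : ℝ) (μ : Measure H) [SigmaFinite μ] (hreg : IsDRegular d Cμ μ)
    (lam : ℝ) (hlam : 0 < lam) (z : H) (r : ℝ) :
    (∫⁻ x in closedBall z r,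
        (∫⁻ t in Set.Ioc (0 : ℝ) (Metric.diam (closedBall z r)),
          (∫⁻ X in USet d lam x t, ENNReal.ofReal (cMTsq d X)
              ∂(Measure.pi fun _ : Fin (d + 2) => μ)) /
            ENNReal.ofReal (t ^ (d + 1)) ∂(volume : Measure ℝ)) ∂μ) ≤
      ENNReal.ofReal ((2 / lam) ^ d * (Cμ / d)) *
        ∫⁻ X in WSet d (lam / 2) (closedBall z (3 * r)), ENNReal.ofReal (cMTsq d X)
          ∂(Measure.pi fun _ : Fin (d + 2) => μ) :=
  multiscale_fubini_bound_of_measurable hd hreg hlam (measurable_cMTsq d).ennreal_ofReal z r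

/-- Multiscale Fubini bound:
∫_B ∫₀^{diam B} c_MT²(x,t,λ) t^{−(d+1)} dt dμ(x)
  ≤ (2/λ)^d (Cμ/d) ∫_{W_{λ/2}(3B)} c_MT(X)² dμ^{d+2}(X). -/
theorem multiscale_curvature_fubini_bound {H : Type*} [NormedAddCommGroup H]
    [InnerProductSpace ℝ H] [CompleteSpace H] [SecondCountableTopology H]
    [MeasurableSpace H] [BorelSpace H]
    (d : ℕ) (hd : 1 ≤ d) (hdim : (d : Cardinal) < Module.rank ℝ H)
    (Cμ : ℝ) (μ : Measure H) [SigmaFinite μ] (hreg : IsDRegular d Cμ μ)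
    (lam : ℝ) (hlam : 0 < lam) (z : H) (r : ℝ) (hr : 0 < r) :
    (∫⁻ x in closedBall z r,
        (∫⁻ t in Set.Ioc (0 : ℝ) (Metric.diam (closedBall z r)),
          (∫⁻ X in USet d lam x t, ENNReal.ofReal (cMTsq d X)
              ∂(Measure.pi fun _ : Fin (d + 2) => μ)) /
            ENNReal.ofReal (t ^ (d + 1)) ∂(volume : Measure ℝ)) ∂μ) ≤
      ENNReal.ofReal ((2 / lam) ^ d * (Cμ / d)) *
        ∫⁻ X in WSet d (lam / 2) (closedBall z (3 * r)), ENNReal.ofReal (cMTsq d X)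
          ∂(Measure.pi fun _ : Fin (d + 2) => μ) :=
  multiscale_curvature_fubini_bound_general d hd Cμ μ hreg lam hlam z r
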